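/- arXiv:1812.02687 — 4 statements merged into one kernel-verified Lean document; each statement's English description precedes it below -/
import Mathlib

section
/- Let n ≥ 1 be an integer, μ > 0, p ∈ (0,1] and η ∈ ℝ. Let f be the density of N(0, 2/n) and g(x) = Σ_{k=0}^{n} C(n,k) p^k (1−p)^{n−k} f(x − kμ/n). Then for every Borel set A ⊆ ℝ with ∫_A f(x) dx ≤ ∫_{(η,∞)} f(x) dx, one has ∫_A g(x) dx ≤ ∫_{(η,∞)} g(x) dx. (In particular, the one-sided test rejecting when the statistic exceeds η is uniformly most powerful at its level.) -/
open MeasureTheory Real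

lemma gauss_cross (n : ℕ) (hn : 1 ≤ n) (f : ℝ → ℝ)
    (hf : ∀ x, f x = Real.sqrt ((n : ℝ) / (4 * Real.pi)) * Real.exp (-(n : ℝ) * x ^ 2 / 4))
    (d x y : ℝ) (hd : 0 ≤ d) (hxy : y ≤ x) :
    f (y - d) * f x ≤ f (x - d) * f y := by
  have hnpos : (0 : ℝ) < n := by exact_mod_cast hn
  set C := Real.sqrt ((n : ℝ) / (4 * Real.pi)) with hC
  have h1 : f (y - d) * f x = C ^ 2 * Real.exp (-(n : ℝ) * (y - d) ^ 2 / 4 + -(n : ℝ) * x ^ 2 / 4) := by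
    rw [hf, hf, Real.exp_add]; ring
  have h2 : f (x - d) * f y = C ^ 2 * Real.exp (-(n : ℝ) * (x - d) ^ 2 / 4 + -(n : ℝ) * y ^ 2 / 4) := by
    rw [hf, hf, Real.exp_add]; ring
  rw [h1, h2]
  apply mul_le_mul_of_nonneg_left _ (sq_nonneg C)
  apply Real.exp_le_exp.2
  nlinarith [mul_nonneg hd (sub_nonneg.2 hxy)]

/-- Neyman–Pearson property of the one-sided test: among Borel sets `A` whose
`f`-measure (level) is at most that of `(η, ∞)`, the rejection region `(η, ∞)`
maximizes the `g`-measure (power). -/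
theorem one_sided_test_UMP (n : ℕ) (hn : 1 ≤ n) (μ p η : ℝ)
    (hμ : 0 < μ) (hp0 : 0 < p) (hp1 : p ≤ 1) (f g : ℝ → ℝ)
    (hf : ∀ x, f x = Real.sqrt ((n : ℝ) / (4 * Real.pi)) * Real.exp (-(n : ℝ) * x ^ 2 / 4))
    (hg : ∀ x, g x = ∑ k ∈ Finset.range (n + 1),
      (n.choose k : ℝ) * p ^ k * (1 - p) ^ (n - k) * f (x - (k : ℝ) * μ / n))
    (A : Set ℝ) (hA : MeasurableSet A)
    (hlevel : (∫ x in A, f x) ≤ ∫ x in Set.Ioi η, f x) :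
    (∫ x in A, g x) ≤ ∫ x in Set.Ioi η, g x := by
  have hnpos : (0 : ℝ) < n := by exact_mod_cast hn
  set I := Set.Ioi η with hI
  have hIm : MeasurableSet I := measurableSet_Ioi
  -- coefficients
  have hp1' : (0:ℝ) ≤ 1 - p := by linarith
  have hcoef : ∀ k, 0 ≤ (n.choose k : ℝ) * p ^ k * (1 - p) ^ (n - k) := fun k =>
    mul_nonneg (mul_nonneg (Nat.cast_nonneg _) (pow_nonneg hp0.le _)) (pow_nonneg hp1' _)
  -- key cross inequality for g
  have key : ∀ x y : ℝ, y ≤ x → g y * f x ≤ g x * f y := by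
    intro x y hxy
    rw [hg x, hg y, Finset.sum_mul, Finset.sum_mul]
    apply Finset.sum_le_sum
    intro k _
    have hcross := gauss_cross n hn f hf ((k : ℝ) * μ / n) x y (by positivity) hxy
    have := mul_le_mul_of_nonneg_left hcross (hcoef k)
    calc (n.choose k : ℝ) * p ^ k * (1 - p) ^ (n - k) * f (y - (k:ℝ) * μ / n) * f x
        = (n.choose k : ℝ) * p ^ k * (1 - p) ^ (n - k) * (f (y - (k:ℝ) * μ / n) * f x) := by ring
      _ ≤ (n.choose k : ℝ) * p ^ k * (1 - p) ^ (n - k) * (f (x - (k:ℝ) * μ / n) * f y) := this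
      _ = (n.choose k : ℝ) * p ^ k * (1 - p) ^ (n - k) * f (x - (k:ℝ) * μ / n) * f y := by ring
  -- f is integrable
  have hfeq : f = fun x => Real.sqrt ((n : ℝ) / (4 * Real.pi)) *
      Real.exp (-((n : ℝ) / 4) * x ^ 2) := by
    funext x; rw [hf]; congr 1; ring
  have hfint : Integrable f := by
    rw [hfeq]
    exact (integrable_exp_neg_mul_sq (by positivity)).const_mul _
  have hfnn : ∀ x, 0 ≤ f x := fun x => by rw [hf]; positivity
  have hfpos : 0 < f η := by
    rw [hf]
    have : (0:ℝ) < Real.sqrt ((n : ℝ) / (4 * Real.pi)) :=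
      Real.sqrt_pos.2 (by positivity)
    positivity
  -- g is integrable and nonneg
  have hgeq : g = fun x => ∑ k ∈ Finset.range (n + 1),
      (n.choose k : ℝ) * p ^ k * (1 - p) ^ (n - k) * f (x - (k : ℝ) * μ / n) :=
    funext hg
  have hgint : Integrable g := by
    rw [hgeq]
    apply integrable_finset_sum
    intro k _
    exact (hfint.comp_sub_right ((k : ℝ) * μ / n)).const_mul _
  have hgnn : ∀ x, 0 ≤ g x := fun x => by
    rw [hg]
    exact Finset.sum_nonneg fun k _ => mul_nonneg (hcoef k) (hfnn _)
  -- h := g x * f η - g η * f x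
  set h : ℝ → ℝ := fun x => g x * f η - g η * f x with hh
  have hhint : Integrable h := (hgint.mul_const _).sub (hfint.const_mul _)
  have hhnnI : ∀ x ∈ I, 0 ≤ h x := fun x hx =>
    sub_nonneg.2 (key x η (le_of_lt hx))
  have hhnpC : ∀ x, x ∉ I → h x ≤ 0 := fun x hx =>
    sub_nonpos.2 (key η x (le_of_not_gt hx))
  -- ∫_A h ≤ ∫_I h
  have hdisjA : Disjoint (A ∩ I) (A \ I) :=
    Set.disjoint_sdiff_right.mono_left Set.inter_subset_right
  have hdisjI : Disjoint (I ∩ A) (I \ A) :=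
    Set.disjoint_sdiff_right.mono_left Set.inter_subset_right
  have hsplitA : (∫ x in A, h x) = (∫ x in A ∩ I, h x) + ∫ x in A \ I, h x := by
    have := setIntegral_union (f := h) (μ := volume) hdisjA (hA.diff hIm)
      hhint.integrableOn hhint.integrableOn
    rwa [Set.inter_union_diff] at this
  have hsplitI : (∫ x in I, h x) = (∫ x in A ∩ I, h x) + ∫ x in I \ A, h x := by
    have := setIntegral_union (f := h) (μ := volume) hdisjI (hIm.diff hA)
      hhint.integrableOn hhint.integrableOn
    rwa [Set.inter_union_diff, Set.inter_comm] at this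
  have hAle : (∫ x in A, h x) ≤ ∫ x in I, h x := by
    rw [hsplitA, hsplitI]
    have h1 : (∫ x in A \ I, h x) ≤ 0 :=
      setIntegral_nonpos (hA.diff hIm) fun x hx => hhnpC x hx.2
    have h2 : (0:ℝ) ≤ ∫ x in I \ A, h x :=
      setIntegral_nonneg (hIm.diff hA) fun x hx => hhnnI x hx.1
    linarith
  -- assemble
  have hAeq : ∀ (S : Set ℝ), (∫ x in S, h x) = (∫ x in S, g x) * f η - g η * ∫ x in S, f x := by
    intro S
    rw [hh]
    rw [integral_sub (hgint.mul_const _).integrableOn (hfint.const_mul _).integrableOn,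
      integral_mul_const, integral_const_mul]
  have final : (∫ x in A, g x) * f η ≤ (∫ x in I, g x) * f η := by
    have := hAle
    rw [hAeq A, hAeq I] at this
    nlinarith [mul_le_mul_of_nonneg_left hlevel (hgnn η)]
  exact le_of_mul_le_mul_right final hfpos
end

section
/- Let n ≥ 1 be an integer, η ∈ ℝ and μ > 0. Then for every p ∈ (0,1), the function p ↦ β(n,η,μ,p) has derivative at p equal to n·Σ_{k=0}^{n−1} C(n−1,k) p^k (1−p)^{n−1−k} [ Φ(√(n/2)·(η − (k+1)μ/n)) − Φ(√(n/2)·(η − kμ/n)) ], and this derivative is strictly negative. -/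
/-!
The map `p ↦ β(n,η,μ,p)` is the Bernstein polynomial of degree `n` of the sequence
`a k = Φ(√(n/2)·(η − kμ/n))`, so its derivative is `n` times the Bernstein polynomial of
degree `n − 1` of the forward differences `a (k+1) − a k`. Since `Φ` is strictly increasing
and `μ > 0`, these differences are negative, and the Bernstein weights are positive on `(0,1)`.
-/

open MeasureTheory ProbabilityTheory Real

/-- Standard normal density. -/
noncomputable def stdphi (t : ℝ) : ℝ := (Real.sqrt (2 * Real.pi))⁻¹ * Real.exp (-t ^ 2 / 2)

/-- Standard normal CDF. -/
noncomputable def stdPhi (x : ℝ) : ℝ := ∫ t in Set.Iic x, stdphi t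

/-- The type II error function β(n,η,μ,p). -/
noncomputable def betaFn (n : ℕ) (η μ p : ℝ) : ℝ :=
  ∑ k ∈ Finset.range (n + 1), (n.choose k : ℝ) * p ^ k * (1 - p) ^ (n - k) *
    stdPhi (Real.sqrt ((n : ℝ) / 2) * (η - (k : ℝ) * μ / n))

open Polynomial in
theorem bernsteinPolynomial.derivative_sum_smul {R : Type*} [CommRing R] (n : ℕ) (a : ℕ → R) :
    derivative (∑ k ∈ Finset.range (n + 2), a k • bernsteinPolynomial R (n + 1) k) =
      (n + 1 : R[X]) *
        ∑ k ∈ Finset.range (n + 1), (a (k + 1) - a k) • bernsteinPolynomial R n k := by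
  rw [Finset.sum_range_succ', derivative_add, derivative_sum]
  simp only [smul_eq_C_mul, C_sub, derivative_C_mul, bernsteinPolynomial.derivative_succ_aux,
    bernsteinPolynomial.derivative_zero, Nat.add_sub_cancel]
  set B := bernsteinPolynomial R n
  have hshift : ∑ k ∈ Finset.range (n + 1), C (a (k + 1)) * B (k + 1) =
      ∑ k ∈ Finset.range (n + 1), C (a k) * B k - C (a 0) * B 0 := by
    rw [eq_sub_iff_add_eq, ← Finset.sum_range_succ' (fun k => C (a k) * B k),
      Finset.sum_range_succ, show B (n + 1) = 0 from bernsteinPolynomial.eq_zero_of_lt R (by omega),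
      mul_zero, add_zero]
  rw [Finset.sum_congr rfl fun k _ => show C (a (k + 1)) * ((n + 1) * (B k - B (k + 1))) =
      (n + 1) * (C (a (k + 1)) * B k) - (n + 1) * (C (a (k + 1)) * B (k + 1)) by ring,
    Finset.sum_sub_distrib, ← Finset.mul_sum, ← Finset.mul_sum, hshift]
  simp only [sub_mul, Finset.sum_sub_distrib]
  push_cast
  ring

theorem bernsteinPolynomial.eval_eq {R : Type*} [CommRing R] (n k : ℕ) (x : R) :
    (bernsteinPolynomial R n k).eval x = n.choose k * x ^ k * (1 - x) ^ (n - k) := by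
  simp [bernsteinPolynomial]

theorem hasDerivAt_sum_bernstein (n : ℕ) (a : ℕ → ℝ) (p : ℝ) :
    HasDerivAt
      (fun q => ∑ k ∈ Finset.range (n + 1),
        (n.choose k : ℝ) * q ^ k * (1 - q) ^ (n - k) * a k)
      (n * ∑ k ∈ Finset.range n,
        ((n - 1).choose k : ℝ) * p ^ k * (1 - p) ^ (n - 1 - k) * (a (k + 1) - a k)) p := by
  rcases n with _ | n
  · simpa using hasDerivAt_const p (a 0)
  have h := (∑ k ∈ Finset.range (n + 2), a k • bernsteinPolynomial ℝ (n + 1) k).hasDerivAt p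
  simp only [bernsteinPolynomial.derivative_sum_smul, Polynomial.eval_finsetSum,
    Polynomial.eval_smul, Polynomial.eval_mul, bernsteinPolynomial.eval_eq, smul_eq_mul] at h
  refine (h.congr_deriv ?_).congr_of_eventuallyEq (.of_forall fun q => ?_)
  · simp only [Nat.add_sub_cancel, Polynomial.eval_add, Polynomial.eval_natCast,
      Polynomial.eval_one, Finset.mul_sum]
    push_cast
    exact Finset.sum_congr rfl fun k _ => by ring
  · exact Finset.sum_congr rfl fun k _ => by ring

theorem choose_mul_pow_mul_one_sub_pow_pos {n k : ℕ} (hk : k ≤ n) {p : ℝ} (hp0 : 0 < p)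
    (hp1 : p < 1) :
    0 < (n.choose k : ℝ) * p ^ k * (1 - p) ^ (n - k) := by
  have : 0 < 1 - p := sub_pos.2 hp1
  have : 0 < (n.choose k : ℝ) := by exact_mod_cast Nat.choose_pos hk
  positivity

theorem strictMono_integral_Iic_of_pos {f : ℝ → ℝ} (hf : Integrable f)
    (hpos : ∀ x, 0 < f x) :
    StrictMono fun x => ∫ t in Set.Iic x, f t := by
  intro a b hab
  have hdiff : (∫ t in Set.Iic b, f t) - ∫ t in Set.Iic a, f t = ∫ t in a..b, f t :=
    intervalIntegral.integral_Iic_sub_Iic hf.integrableOn hf.integrableOn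
  have hint : 0 < ∫ t in a..b, f t :=
    intervalIntegral.intervalIntegral_pos_of_pos_on hf.intervalIntegrable (fun x _ => hpos x) hab
  exact sub_pos.1 (hdiff ▸ hint)

theorem stdphi_eq_gaussianPDFReal : stdphi = gaussianPDFReal 0 1 := by
  ext t
  simp [stdphi, gaussianPDFReal]

theorem stdPhi_strictMono : StrictMono stdPhi := by
  rw [show stdPhi = fun x => ∫ t in Set.Iic x, stdphi t from rfl, stdphi_eq_gaussianPDFReal]
  exact strictMono_integral_Iic_of_pos (integrable_gaussianPDFReal 0 1)
    fun x => gaussianPDFReal_pos 0 1 x one_ne_zero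

/-- The derivative of `p ↦ β(n,η,μ,p)` is the stated sum, and it is strictly negative. -/
theorem betaFn_hasDerivAt_p_neg (n : ℕ) (hn : 1 ≤ n) (η μ : ℝ) (hμ : 0 < μ)
    (p : ℝ) (hp0 : 0 < p) (hp1 : p < 1) (d : ℝ)
    (hd : d = (n : ℝ) * ∑ k ∈ Finset.range n,
      ((n - 1).choose k : ℝ) * p ^ k * (1 - p) ^ (n - 1 - k) *
        (stdPhi (Real.sqrt ((n : ℝ) / 2) * (η - ((k : ℝ) + 1) * μ / n)) -
          stdPhi (Real.sqrt ((n : ℝ) / 2) * (η - (k : ℝ) * μ / n)))) :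
    HasDerivAt (fun q : ℝ => betaFn n η μ q) d p ∧ d < 0 := by
  subst hd
  have hn0 : (0 : ℝ) < n := by exact_mod_cast hn
  have hstep (k : ℕ) : stdPhi (√(n / 2) * (η - (k + 1) * μ / n)) -
      stdPhi (√(n / 2) * (η - k * μ / n)) < 0 := by
    refine sub_neg.2 (stdPhi_strictMono ?_)
    gcongr
    linarith
  have hderiv := hasDerivAt_sum_bernstein n (fun k => stdPhi (√(n / 2) * (η - k * μ / n))) p
  push_cast at hderiv
  refine ⟨hderiv, mul_neg_of_pos_of_neg hn0
    (Finset.sum_neg (fun k hk => ?_) ⟨0, Finset.mem_range.2 hn⟩)⟩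
  exact mul_neg_of_pos_of_neg
    (choose_mul_pow_mul_one_sub_pow_pos (Nat.le_sub_one_of_lt (Finset.mem_range.1 hk)) hp0 hp1)
    (hstep k)
end

section
/- Let a, b, c ∈ ℝ with a > b and s > 0. Then Φ((a − c)/s) − Φ((b − c)/s) ≤ 2Φ((a − b)/(2s)) − 1, with equality if and only if c = (a + b)/2. -/
open MeasureTheory Real

lemma integrable_stdphi : MeasureTheory.Integrable stdphi := by
  have h : stdphi = fun t => (Real.sqrt (2 * Real.pi))⁻¹ * Real.exp (-(1/2 : ℝ) * t ^ 2) := by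
    funext t; unfold stdphi; ring_nf
  rw [h]
  exact (integrable_exp_neg_mul_sq (by norm_num)).const_mul _

lemma stdphi_pos (t : ℝ) : 0 < stdphi t := by
  unfold stdphi
  positivity

lemma stdphi_total : ∫ t, stdphi t = 1 := by
  have h : stdphi = fun t => (Real.sqrt (2 * Real.pi))⁻¹ * Real.exp (-(1/2 : ℝ) * t ^ 2) := by
    funext t; unfold stdphi; ring_nf
  rw [h, MeasureTheory.integral_const_mul, integral_gaussian]
  rw [show (π / (1/2 : ℝ)) = 2 * π by ring]
  rw [inv_mul_cancel₀]
  positivity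

lemma stdphi_even (t : ℝ) : stdphi (-t) = stdphi t := by
  unfold stdphi; ring_nf

lemma stdPhi_neg (x : ℝ) : stdPhi (-x) = 1 - stdPhi x := by
  unfold stdPhi
  have h1 : (∫ t in Set.Iic (-x), stdphi t) = ∫ t in Set.Ioi x, stdphi t := by
    calc (∫ t in Set.Iic (-x), stdphi t) = ∫ t in Set.Iic (-x), stdphi (-t) :=
          MeasureTheory.setIntegral_congr_fun measurableSet_Iic fun t _ => (stdphi_even t).symm
      _ = ∫ t in Set.Ioi (-(-x)), stdphi t := integral_comp_neg_Iic (-x) stdphi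
      _ = ∫ t in Set.Ioi x, stdphi t := by rw [neg_neg]
  rw [h1, eq_sub_iff_add_eq, add_comm]
  rw [intervalIntegral.integral_Iic_add_Ioi integrable_stdphi.integrableOn
    integrable_stdphi.integrableOn]
  exact stdphi_total

lemma stdPhi_sub (x y : ℝ) : stdPhi x - stdPhi y = ∫ t in y..x, stdphi t :=
  intervalIntegral.integral_Iic_sub_Iic integrable_stdphi.integrableOn
    integrable_stdphi.integrableOn

/-- The core one-variable lemma: for `h > 0` and any `u`, with `g t = φ(t-2h) - φ t`,
`0 < ∫ t in h..u, g t` when `u ≠ h`. -/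
lemma key_int_pos {h u : ℝ} (hh : 0 < h) (hu : u ≠ h) :
    0 < ∫ t in h..u, (stdphi (t - 2 * h) - stdphi t) := by
  have hint : ∀ a b : ℝ, IntervalIntegrable (fun t => stdphi (t - 2 * h) - stdphi t)
      MeasureTheory.volume a b := by
    intro a b
    exact ((integrable_stdphi.comp_sub_right (2*h)).sub integrable_stdphi).intervalIntegrable
  have hgpos : ∀ t : ℝ, h < t → 0 < stdphi (t - 2 * h) - stdphi t := by
    intro t ht
    have : (t - 2*h)^2 < t^2 := by nlinarith
    unfold stdphi
    have := Real.exp_lt_exp.mpr (show -t^2/2 < -(t-2*h)^2/2 by linarith)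
    have hs : (0:ℝ) < (Real.sqrt (2 * Real.pi))⁻¹ := by positivity
    nlinarith
  rcases lt_or_gt_of_ne hu with hlt | hgt
  · rw [intervalIntegral.integral_symm]
    rw [show (∫ t in u..h, (stdphi (t - 2*h) - stdphi t)) =
        -∫ t in u..h, (stdphi t - stdphi (t - 2*h)) by
      rw [← intervalIntegral.integral_neg]; congr 1; funext t; ring]
    rw [neg_neg]
    apply intervalIntegral.intervalIntegral_pos_of_pos_on
    · exact (integrable_stdphi.sub (integrable_stdphi.comp_sub_right (2*h))).intervalIntegrable
    · intro t ht
      have h2 : t < h := ht.2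
      -- stdphi t > stdphi (t - 2h) when t < h
      have : t^2 < (t - 2*h)^2 := by nlinarith
      unfold stdphi
      have := Real.exp_lt_exp.mpr (show -(t-2*h)^2/2 < -t^2/2 by linarith)
      have hs : (0:ℝ) < (Real.sqrt (2 * Real.pi))⁻¹ := by positivity
      nlinarith
    · exact hlt
  · apply intervalIntegral.intervalIntegral_pos_of_pos_on (hint h u)
    · intro t ht; exact hgpos t ht.1
    · exact hgt

/-- For `a > b` and `s > 0`: `Φ((a−c)/s) − Φ((b−c)/s) ≤ 2Φ((a−b)/(2s)) − 1`,
with equality iff `c = (a+b)/2`. -/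
theorem Phi_window_max (a b c s : ℝ) (hab : b < a) (hs : 0 < s) :
    stdPhi ((a - c) / s) - stdPhi ((b - c) / s) ≤ 2 * stdPhi ((a - b) / (2 * s)) - 1 ∧
    (stdPhi ((a - c) / s) - stdPhi ((b - c) / s) = 2 * stdPhi ((a - b) / (2 * s)) - 1 ↔
      c = (a + b) / 2) := by
  set u := (a - c) / s with hu
  set v := (b - c) / s with hv
  set h := (a - b) / (2 * s) with hh
  have hh0 : 0 < h := by
    apply div_pos (by linarith) (by linarith)
  have hvu : v = u - 2 * h := by
    field_simp [hu, hv, hh]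
    ring
  have hM : 2 * stdPhi h - 1 = stdPhi h - stdPhi (-h) := by
    rw [stdPhi_neg]; ring
  have hdiff : (2 * stdPhi h - 1) - (stdPhi u - stdPhi v) =
      ∫ t in h..u, (stdphi (t - 2 * h) - stdphi t) := by
    rw [hM, stdPhi_sub, stdPhi_sub]
    rw [intervalIntegral.integral_sub
      ((integrable_stdphi.comp_sub_right (2*h)).intervalIntegrable)
      (integrable_stdphi.intervalIntegrable)]
    have hshift : (∫ t in h..u, stdphi (t - 2 * h)) = ∫ t in (-h)..v, stdphi t := by
      rw [intervalIntegral.integral_comp_sub_right stdphi (2*h)]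
      congr 1
      · ring
      · rw [hvu]
    rw [hshift]
    have hsplit : (∫ t in v..u, stdphi t) =
        (∫ t in v..(-h), stdphi t) + (∫ t in (-h)..h, stdphi t) + ∫ t in h..u, stdphi t := by
      rw [intervalIntegral.integral_add_adjacent_intervals
        (integrable_stdphi.intervalIntegrable) (integrable_stdphi.intervalIntegrable),
        intervalIntegral.integral_add_adjacent_intervals
        (integrable_stdphi.intervalIntegrable) (integrable_stdphi.intervalIntegrable)]
    have hsym : (∫ t in v..(-h), stdphi t) = -∫ t in (-h)..v, stdphi t :=
      intervalIntegral.integral_symm _ _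
    have hIic : (∫ t in (-h)..h, stdphi t) = stdPhi h - stdPhi (-h) := (stdPhi_sub h (-h)).symm
    rw [hsplit, hsym, hIic]
    ring
  have hueq : u = h ↔ c = (a + b) / 2 := by
    rw [hu, hh]
    rw [div_eq_div_iff (by linarith) (by linarith)]
    constructor
    · intro heq; nlinarith
    · intro heq; rw [heq]; ring
  by_cases hcase : u = h
  · have hzero : (∫ t in h..u, (stdphi (t - 2 * h) - stdphi t)) = 0 := by
      rw [hcase]; exact intervalIntegral.integral_same
    constructor
    · linarith [hdiff, hzero]
    · constructor
      · intro _; exact hueq.mp hcase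
      · intro _; linarith [hdiff, hzero]
  · have hpos := key_int_pos hh0 hcase
    constructor
    · linarith [hdiff, hpos]
    · constructor
      · intro heq; exfalso; rw [heq] at hdiff; simp at hdiff; linarith
      · intro heq; exact absurd (hueq.mpr heq) hcase
end

section
/- (Lemma 4) Let P_1, ..., P_M be independent real-valued random variables (p-values) on a probability space, let α(1) ≤ ... ≤ α(M) be nondecreasing real thresholds, let S₁ ⊆ {1,...,M} with #S₁ = M₁ ≥ 1, let 1 ≤ m ≤ M₁, and set r = M₁ + 1 − m. Suppose β ∈ [0,1] is such that P(P_i ≤ α(r)) ≥ 1 − β for every i ∈ S₁. Let R(ω) denote the Hochberg rejection set computed from P_1(ω), ..., P_M(ω). Then the probability that fewer than m hypotheses of S₁ fail to be rejected satisfies P( #(S₁ ∩ R) ≥ M₁ + 1 − m ) ≥ (1 − β)^{M₁+1−m}; equivalently, the family-wise type II error probability P( #(S₁ \ R) ≥ m ) is at most 1 − (1 − β)^{M₁+1−m}. -/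
open MeasureTheory ProbabilityTheory
open scoped Classical

/-- Number of p-values among indices `1,...,M` that are at most `α j`. -/
noncomputable def hochE (M : ℕ) (α p : ℕ → ℝ) (j : ℕ) : ℕ :=
  ((Finset.Icc 1 M).filter fun i => p i ≤ α j).card

/-- The set of indices `k ∈ {1,...,M}` with `e_k ≥ k`. -/
noncomputable def hochKset (M : ℕ) (α p : ℕ → ℝ) : Finset ℕ :=
  (Finset.Icc 1 M).filter fun k => k ≤ hochE M α p k

/-- The Hochberg index `K` (`0` if the set is empty). -/
noncomputable def hochK (M : ℕ) (α p : ℕ → ℝ) : ℕ := WithBot.unbotD 0 (hochKset M α p).max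

/-- The Hochberg rejection set. -/
noncomputable def hochR (M : ℕ) (α p : ℕ → ℝ) : Finset ℕ :=
  if hochK M α p = 0 then ∅
  else (Finset.Icc 1 M).filter fun i => p i ≤ α (hochK M α p)

open Finset

/-! With `r = M₁ + 1 - m`, fix `r` indices `T ⊆ S₁`. If every p-value in `T` is at most `α r`,
then `e_r ≥ r`, so the step-up index satisfies `K ≥ r` and, by monotonicity of `α`, every
index of `T` is rejected. By independence this event has probability at least `(1 - β) ^ r`,
and it is disjoint from the event that `m` indices of `S₁` are not rejected. -/

theorem ProbabilityTheory.iIndepFun.pow_card_le_measure_biInter {Ω ι β : Type*}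
    [MeasurableSpace Ω] [MeasurableSpace β] {P : Measure Ω} {X : ι → Ω → β} (hX : iIndepFun X P)
    {s : ι → Set β} {T : Finset ι} (hs : ∀ i ∈ T, MeasurableSet (s i)) {q : ENNReal}
    (hq : ∀ i ∈ T, q ≤ P (X i ⁻¹' s i)) :
    q ^ #T ≤ P (⋂ i ∈ T, X i ⁻¹' s i) := by
  rw [hX.meas_biInter fun i hi => ⟨s i, hs i hi, rfl⟩, ← prod_const]
  exact prod_le_prod' hq

theorem MeasureTheory.measure_le_ofReal_one_sub_of_subset_compl {Ω : Type*}
    [MeasurableSpace Ω] {P : Measure Ω} [IsProbabilityMeasure P] {A B : Set Ω}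
    (hA : MeasurableSet A) (hB : B ⊆ Aᶜ) {q : ℝ} (hq : 0 ≤ q) (hqA : ENNReal.ofReal q ≤ P A) :
    P B ≤ ENNReal.ofReal (1 - q) :=
  calc P B ≤ P Aᶜ := measure_mono hB
    _ = 1 - P A := prob_compl_eq_one_sub hA
    _ ≤ 1 - ENNReal.ofReal q := tsub_le_tsub_left hqA 1
    _ = ENNReal.ofReal (1 - q) := by rw [ENNReal.ofReal_sub _ hq, ENNReal.ofReal_one]

section Hochberg

variable {M : ℕ} {α p : ℕ → ℝ}

theorem hochK_eq_max' (h : (hochKset M α p).Nonempty) :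
    hochK M α p = (hochKset M α p).max' h := by
  rw [hochK, ← coe_max' h]
  rfl

theorem filter_le_subset_hochR (hα : MonotoneOn α (Set.Icc 1 M)) {r : ℕ}
    (hr : r ∈ hochKset M α p) : {i ∈ Icc 1 M | p i ≤ α r} ⊆ hochR M α p := by
  have hne : (hochKset M α p).Nonempty := ⟨r, hr⟩
  have hrK : r ≤ hochK M α p := hochK_eq_max' hne ▸ le_max' _ r hr
  have hK : hochK M α p ∈ Icc 1 M :=
    (mem_filter.1 (hochK_eq_max' hne ▸ max'_mem _ hne)).1
  have hr1 : r ∈ Icc 1 M := (mem_filter.1 hr).1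
  rw [hochR, if_neg (Nat.one_le_iff_ne_zero.1 (mem_Icc.1 hK).1)]
  exact fun i hi => mem_filter.2 ⟨(mem_filter.1 hi).1,
    (mem_filter.1 hi).2.trans (hα (mem_Icc.1 hr1) (mem_Icc.1 hK) hrK)⟩

theorem le_card_inter_hochR (hα : MonotoneOn α (Set.Icc 1 M)) {S : Finset ℕ}
    (hS : S ⊆ Icc 1 M) {r : ℕ} (h : r ≤ #{i ∈ S | p i ≤ α r}) :
    r ≤ #(S ∩ hochR M α p) := by
  rcases Nat.eq_zero_or_pos r with rfl | hr0
  · exact Nat.zero_le _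
  have hsub : {i ∈ S | p i ≤ α r} ⊆ {i ∈ Icc 1 M | p i ≤ α r} := filter_subset_filter _ hS
  have hrM : r ≤ M := by
    simpa using h.trans ((card_le_card (filter_subset _ S)).trans (card_le_card hS))
  have hr : r ∈ hochKset M α p :=
    mem_filter.2 ⟨mem_Icc.2 ⟨hr0, hrM⟩, h.trans (card_le_card hsub)⟩
  exact h.trans <| card_le_card fun i hi =>
    mem_inter.2 ⟨(mem_filter.1 hi).1, filter_le_subset_hochR hα hr (hsub hi)⟩

end Hochberg

theorem hochberg_familywise_typeII_bound_general {Ω : Type*} [MeasurableSpace Ω] (P : Measure Ω)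
    [IsProbabilityMeasure P] (M : ℕ)
    (X : ℕ → Ω → ℝ) (hmeas : ∀ i, Measurable (X i))
    (hindep : iIndepFun
      (fun i : {i // i ∈ Finset.Icc 1 M} => X i.1) P)
    (α : ℕ → ℝ) (hα : ∀ j k, 1 ≤ j → j ≤ k → k ≤ M → α j ≤ α k)
    (S₁ : Finset ℕ) (hS₁ : S₁ ⊆ Finset.Icc 1 M)
    (M₁ m : ℕ) (hcard : S₁.card = M₁) (hm1 : 1 ≤ m)
    (β : ℝ) (hβ1 : β ≤ 1)
    (hβ : ∀ i ∈ S₁, ENNReal.ofReal (1 - β) ≤ P {ω | X i ω ≤ α (M₁ + 1 - m)}) :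
    ENNReal.ofReal ((1 - β) ^ (M₁ + 1 - m)) ≤
      P {ω | M₁ + 1 - m ≤ (S₁ ∩ hochR M α fun i => X i ω).card} ∧
    P {ω | m ≤ (S₁ \ hochR M α fun i => X i ω).card} ≤
      ENNReal.ofReal (1 - (1 - β) ^ (M₁ + 1 - m)) := by
  set r := M₁ + 1 - m
  have hα' : MonotoneOn α (Set.Icc 1 M) := fun j hj k hk hjk => hα j k hj.1 hjk hk.2
  obtain ⟨T, hTS, hTcard⟩ : ∃ T ⊆ S₁.subtype (· ∈ Icc 1 M), #T = r :=
    exists_subset_card_eq (by rw [card_subtype, filter_true_of_mem hS₁]; omega)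
  set A : Set Ω := ⋂ i ∈ T, X i.1 ⁻¹' Set.Iic (α r)
  have hPA : ENNReal.ofReal ((1 - β) ^ r) ≤ P A := by
    rw [ENNReal.ofReal_pow (by linarith), ← hTcard]
    exact hindep.pow_card_le_measure_biInter (fun _ _ => measurableSet_Iic)
      fun i hi => hβ i.1 (by simpa using hTS hi)
  have hA : ∀ ω ∈ A, r ≤ #(S₁ ∩ hochR M α fun i => X i ω) := fun ω hω =>
    le_card_inter_hochR hα' hS₁ <| hTcard.ge.trans <| card_le_card_of_injOn Subtype.val
      (fun i hi => mem_filter.2 ⟨by simpa using hTS hi, Set.mem_iInter₂.1 hω i hi⟩)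
      Subtype.val_injective.injOn
  refine ⟨hPA.trans (measure_mono hA), measure_le_ofReal_one_sub_of_subset_compl
    (T.measurableSet_biInter fun i _ => hmeas i measurableSet_Iic) ?_ (by positivity) hPA⟩
  intro ω (hω : m ≤ #(S₁ \ hochR M α fun i => X i ω)) hωA
  have := card_inter_add_card_sdiff S₁ (hochR M α fun i => X i ω)
  have := hA ω hωA
  omega

/-- (Lemma 4) If the `M₁` p-values of the centers in `S₁` each satisfy
`P(P_i ≤ α(M₁+1−m)) ≥ 1 − β`, then the probability that at least `M₁+1−m` hypotheses of
`S₁` are rejected is at least `(1−β)^{M₁+1−m}`; equivalently, the family-wise type II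
error probability (at least `m` hypotheses of `S₁` not rejected) is at most
`1 − (1−β)^{M₁+1−m}`. -/
theorem hochberg_familywise_typeII_bound {Ω : Type*} [MeasurableSpace Ω] (P : Measure Ω)
    [IsProbabilityMeasure P] (M : ℕ) (hM : 1 ≤ M)
    (X : ℕ → Ω → ℝ) (hmeas : ∀ i, Measurable (X i))
    (hindep : iIndepFun
      (fun i : {i // i ∈ Finset.Icc 1 M} => X i.1) P)
    (α : ℕ → ℝ) (hα : ∀ j k, 1 ≤ j → j ≤ k → k ≤ M → α j ≤ α k)
    (S₁ : Finset ℕ) (hS₁ : S₁ ⊆ Finset.Icc 1 M)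
    (M₁ m : ℕ) (hcard : S₁.card = M₁) (hM₁ : 1 ≤ M₁) (hm1 : 1 ≤ m) (hm2 : m ≤ M₁)
    (β : ℝ) (hβ0 : 0 ≤ β) (hβ1 : β ≤ 1)
    (hβ : ∀ i ∈ S₁, ENNReal.ofReal (1 - β) ≤ P {ω | X i ω ≤ α (M₁ + 1 - m)}) :
    ENNReal.ofReal ((1 - β) ^ (M₁ + 1 - m)) ≤
      P {ω | M₁ + 1 - m ≤ (S₁ ∩ hochR M α fun i => X i ω).card} ∧
    P {ω | m ≤ (S₁ \ hochR M α fun i => X i ω).card} ≤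
      ENNReal.ofReal (1 - (1 - β) ^ (M₁ + 1 - m)) :=
  hochberg_familywise_typeII_bound_general P M X hmeas hindep α hα S₁ hS₁ M₁ m hcard hm1 β hβ1 hβ
end
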